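/- arXiv:2410.07048 — 2 statements merged into one kernel-verified Lean document; each statement's English description precedes it below -/
import Mathlib

section
/- For every subset S ⊆ {1, …, n} and every integer ℓ ≥ 0, the element (ε̄_S μ^ℓ) ∩ c_{p^n} of A is zero if and only if the remainder of ℓ modulo p^{n+1} is strictly less than p^n + f(S). (Here p^n + f(S) ≥ 1 for every S ⊆ {1, …, n}.) -/
/-- Index of the monomial basis `ε_S μ^k` of `A = 𝔽_p[μ] ⊗ Λ(ε_0, …, ε_n)`. -/
abbrev Idx (n : ℕ) := Finset (Fin (n + 1)) × ℕ

/-- The underlying `𝔽_p`-vector space of `A = 𝔽_p[μ] ⊗ Λ(ε_0, …, ε_n)`,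
with basis the monomials `ε_S μ^k`. -/
abbrev A (p n : ℕ) := Idx n →₀ ZMod p

/-- The monomial `μ^k`. -/
noncomputable def mup (p n k : ℕ) : A p n :=
  Finsupp.single ((∅ : Finset (Fin (n + 1))), k) (1 : ZMod p)

/-- Koszul sign occurring when multiplying `ε_S` by `ε_T`: `(−1)^{#{(s,t) ∈ S×T : t < s}}`. -/
noncomputable def msign (p n : ℕ) (S T : Finset (Fin (n + 1))) : ZMod p :=
  (-1 : ZMod p) ^ ((S ×ˢ T).filter (fun st => st.2 < st.1)).card

/-- Product of two basis monomials of `A`. -/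
noncomputable def mulB (p n : ℕ) (b c : Idx n) : A p n :=
  if Disjoint b.1 c.1 then
    msign p n b.1 c.1 • Finsupp.single (b.1 ∪ c.1, b.2 + c.2) (1 : ZMod p)
  else 0

/-- The graded-commutative multiplication of `A`, extended bilinearly from monomials. -/
noncomputable def mul (p n : ℕ) (x y : A p n) : A p n :=
  x.sum fun b a => y.sum fun c d => (a * d) • mulB p n b c

/-- The `σ` operator: the `𝔽_p[μ]`-linear graded derivation with `σ(ε_i) = μ^{p^i}`,
given on a basis monomial `ε_{i₁}⋯ε_{i_m} μ^k` (with `i₁ < ⋯ < i_m`) by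
`Σ_j (−1)^{j−1} ε_{i₁}⋯ε_{i_{j−1}} ε_{i_{j+1}}⋯ε_{i_m} μ^{k + p^{i_j}}`. -/
noncomputable def sigma (p n : ℕ) : A p n →ₗ[ZMod p] A p n :=
  Finsupp.lsum (ZMod p) fun b =>
    LinearMap.toSpanSingleton (ZMod p) (A p n)
      (∑ s ∈ b.1, ((-1 : ZMod p) ^ (b.1.filter (· < s)).card) •
        Finsupp.single (b.1.erase s, b.2 + p ^ (s : ℕ)) (1 : ZMod p))

/-- The cap product operator `− ∩ c_m`, with `(ε_S μ^j) ∩ c_m = C(j, m)·ε_S μ^{j−m}`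
(zero when `j < m`, since then `C(j, m) = 0`). -/
noncomputable def cap (p n m : ℕ) : A p n →ₗ[ZMod p] A p n :=
  Finsupp.lsum (ZMod p) fun b =>
    LinearMap.toSpanSingleton (ZMod p) (A p n)
      ((Nat.choose b.2 m : ZMod p) • Finsupp.single (b.1, b.2 - m) (1 : ZMod p))

open Fin.NatCast in
/-- `ε̄_i := ε_i − μ^{p^i − p^{i−1}} ε_{i−1}`. -/
noncomputable def ebar (p n : ℕ) (i : ℕ) : A p n :=
  Finsupp.single (({(i : Fin (n + 1))} : Finset (Fin (n + 1))), 0) (1 : ZMod p)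
    - Finsupp.single (({((i - 1 : ℕ) : Fin (n + 1))} : Finset (Fin (n + 1))),
        p ^ i - p ^ (i - 1)) (1 : ZMod p)

/-- `ε̄_S`: the product of the `ε̄_s` for `s ∈ S`, taken in increasing order of `s`
(with `ε̄_∅ = 1`). -/
noncomputable def ebarProd (p n : ℕ) (S : Finset ℕ) : A p n :=
  (S.sort (· ≤ ·)).foldr (fun s acc => mul p n (ebar p n s) acc) (mup p n 0)

/-- `f(S) := Σ_{s∈S} (p^{s−1} − p^s)`. -/
noncomputable def fS (p : ℕ) (S : Finset ℕ) : ℤ :=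
  ∑ s ∈ S, ((p : ℤ) ^ (s - 1) - (p : ℤ) ^ s)

/-! ### Auxiliary definitions -/

open Fin.NatCast


def dstep (p s : ℕ) : ℕ := p ^ s - p ^ (s - 1)

def elist (p : ℕ) (ls : List ℕ) : ℕ := (ls.map (dstep p)).sum

def Tset (n : ℕ) (ls : List ℕ) (j : ℕ) : Finset (Fin (n + 1)) :=
  ((ls.take j).map (fun s => ((s - 1 : ℕ) : Fin (n + 1)))).toFinset ∪
    ((ls.drop j).map (fun s => ((s : ℕ) : Fin (n + 1)))).toFinset

noncomputable def P (p n : ℕ) (ls : List ℕ) : A p n :=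
  ls.foldr (fun s acc => mul p n (ebar p n s) acc) (mup p n 0)

/-! ### Structural lemmas about `mul` -/

lemma msign_one {p n : ℕ} {i : Fin (n + 1)} {T : Finset (Fin (n + 1))}
    (h : ∀ t ∈ T, ¬ t < i) : msign p n {i} T = 1 := by
  have he : (({i} ×ˢ T).filter (fun st => st.2 < st.1)) = ∅ := by
    apply Finset.filter_eq_empty_iff.mpr
    intro st hst
    rw [Finset.mem_product, Finset.mem_singleton] at hst
    rw [hst.1]
    exact h st.2 hst.2
  rw [msign, he]
  simp

lemma mul_single_left {p n : ℕ} (b₀ : Idx n) (y : A p n) :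
    mul p n (Finsupp.single b₀ (1 : ZMod p)) y = y.sum fun c d => d • mulB p n b₀ c := by
  rw [mul, Finsupp.sum_single_index]
  · simp only [one_mul]
  · simp only [zero_mul, zero_smul, Finsupp.sum, Finset.sum_const_zero]

lemma mul_sub_left {p n : ℕ} (x x' y : A p n) :
    mul p n (x - x') y = mul p n x y - mul p n x' y := by
  rw [mul, mul, mul, Finsupp.sum_sub_index]
  intro b a₁ a₂
  rw [Finsupp.sum, Finsupp.sum, Finsupp.sum, ← Finset.sum_sub_distrib]
  refine Finset.sum_congr rfl fun c _ => ?_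
  rw [sub_mul, sub_smul]

lemma mul_single_apply {p n : ℕ} (i : Fin (n + 1)) (k : ℕ) (y : A p n)
    (hy : ∀ b ∈ y.support, ∀ t ∈ b.1, i ≤ t) (T : Finset (Fin (n + 1))) (e : ℕ) :
    (mul p n (Finsupp.single (({i} : Finset (Fin (n+1))), k) (1 : ZMod p)) y) (T, e) =
      if i ∈ T ∧ k ≤ e then y (T.erase i, e - k) else 0 := by
  rw [mul_single_left, Finsupp.sum_apply, Finsupp.sum]
  by_cases hc : i ∈ T ∧ k ≤ e
  · rw [if_pos hc]
    rw [Finset.sum_eq_single ((T.erase i, e - k) : Idx n)]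
    · by_cases hsupp : ((T.erase i, e - k) : Idx n) ∈ y.support
      · have hle : ∀ t ∈ T.erase i, i ≤ t := fun t ht => hy _ hsupp t ht
        have hdisj : Disjoint ({i} : Finset (Fin (n+1))) (T.erase i) := by
          rw [Finset.disjoint_singleton_left]
          exact Finset.notMem_erase i T
        have hsign : msign p n {i} (T.erase i) = 1 :=
          msign_one (fun t ht => not_lt.mpr (hle t ht))
        rw [Finsupp.smul_apply, mulB, if_pos hdisj, hsign, one_smul]
        have hpt : (({i} ∪ T.erase i, k + (e - k)) : Idx n) = (T, e) := by
          rw [← Finset.insert_eq, Finset.insert_erase hc.1, Nat.add_sub_cancel' hc.2]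
        rw [hpt, Finsupp.single_eq_same, smul_eq_mul, mul_one]
      · rw [Finsupp.notMem_support_iff.mp hsupp, zero_smul]
        simp
    · intro c hcmem hcne
      rw [Finsupp.smul_apply, mulB]
      split_ifs with hdisj
      · rw [Finsupp.smul_apply]
        have hne : (({i} ∪ c.1, k + c.2) : Idx n) ≠ (T, e) := by
          intro hEq
          apply hcne
          have h1 : {i} ∪ c.1 = T := (Prod.mk.injEq _ _ _ _ ▸ hEq).1
          have h2 : k + c.2 = e := (Prod.mk.injEq _ _ _ _ ▸ hEq).2
          have hi : i ∉ c.1 := Finset.disjoint_singleton_left.mp hdisj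
          have hc1 : c.1 = T.erase i := by
            ext a
            constructor
            · intro ha
              refine Finset.mem_erase.mpr ⟨fun hai => hi (hai ▸ ha), ?_⟩
              rw [← h1]
              exact Finset.mem_union_right _ ha
            · intro ha
              rcases Finset.mem_erase.mp ha with ⟨hai, haT⟩
              rw [← h1] at haT
              rcases Finset.mem_union.mp haT with h | h
              · exact absurd (Finset.mem_singleton.mp h) hai
              · exact h
          have hc2 : c.2 = e - k := by omega
          exact Prod.ext hc1 hc2
        rw [Finsupp.single_apply, if_neg hne, smul_zero, smul_zero]
      · rw [Finsupp.coe_zero, Pi.zero_apply, smul_zero]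
    · intro hnot
      rw [Finsupp.notMem_support_iff.mp hnot, zero_smul]
      simp
  · rw [if_neg hc]
    apply Finset.sum_eq_zero
    intro c _
    rw [Finsupp.smul_apply, mulB]
    split_ifs with hdisj
    · rw [Finsupp.smul_apply]
      have hne : (({i} ∪ c.1, k + c.2) : Idx n) ≠ (T, e) := by
        intro hEq
        apply hc
        have h1 : {i} ∪ c.1 = T := (Prod.mk.injEq _ _ _ _ ▸ hEq).1
        have h2 : k + c.2 = e := (Prod.mk.injEq _ _ _ _ ▸ hEq).2
        exact ⟨h1 ▸ Finset.mem_union_left _ (Finset.mem_singleton_self i), by omega⟩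
      rw [Finsupp.single_apply, if_neg hne, smul_zero, smul_zero]
    · rw [Finsupp.coe_zero, Pi.zero_apply, smul_zero]

lemma ebar_mul_apply {p n : ℕ} (s : ℕ) (hsn : s ≤ n) (y : A p n)
    (hy : ∀ b ∈ y.support, ∀ t ∈ b.1, s ≤ (t : ℕ)) (T : Finset (Fin (n + 1))) (e : ℕ) :
    (mul p n (ebar p n s) y) (T, e) =
      (if ((s : ℕ) : Fin (n + 1)) ∈ T then y (T.erase ((s : ℕ) : Fin (n + 1)), e) else 0)
      - (if ((s - 1 : ℕ) : Fin (n + 1)) ∈ T ∧ dstep p s ≤ e then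
          y (T.erase ((s - 1 : ℕ) : Fin (n + 1)), e - dstep p s) else 0) := by
  have hvs : (((s : ℕ) : Fin (n + 1)) : ℕ) = s := Fin.val_cast_of_lt (by omega)
  have hvs1 : (((s - 1 : ℕ) : Fin (n + 1)) : ℕ) = s - 1 := Fin.val_cast_of_lt (by omega)
  have h1 : ∀ b ∈ y.support, ∀ t ∈ b.1, ((s : ℕ) : Fin (n + 1)) ≤ t := by
    intro b hb t ht
    rw [Fin.le_def, hvs]
    exact hy b hb t ht
  have h2 : ∀ b ∈ y.support, ∀ t ∈ b.1, ((s - 1 : ℕ) : Fin (n + 1)) ≤ t := by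
    intro b hb t ht
    rw [Fin.le_def, hvs1]
    exact le_trans (Nat.sub_le s 1) (hy b hb t ht)
  rw [ebar, mul_sub_left, Finsupp.sub_apply,
    mul_single_apply _ 0 y h1 T e, mul_single_apply _ (p ^ s - p ^ (s - 1)) y h2 T e]
  simp only [Nat.zero_le, and_true, Nat.sub_zero, dstep]
  congr

lemma mul_mup {p n : ℕ} (x : A p n) (l : ℕ) :
    mul p n x (mup p n l) = Finsupp.mapDomain (fun b : Idx n => (b.1, b.2 + l)) x := by
  rw [mul, Finsupp.mapDomain]
  refine Finset.sum_congr rfl fun b _ => ?_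
  dsimp only
  rw [mup, Finsupp.sum_single_index]
  · have hd : Disjoint b.1 (∅ : Finset (Fin (n + 1))) := Finset.disjoint_empty_right _
    have hs : msign p n b.1 (∅ : Finset (Fin (n + 1))) = 1 := by
      rw [msign]
      simp
    rw [mulB, if_pos hd, hs, one_smul, Finset.union_empty, mul_one,
      Finsupp.smul_single, smul_eq_mul, mul_one]
  · simp only [mul_zero, zero_smul]

/-! ### The master expansion lemma -/

lemma master (p n : ℕ) (ls : List ℕ) (hchain : ls.Chain' (· < ·))
    (hmem : ∀ s ∈ ls, 1 ≤ s ∧ s ≤ n) :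
    (∀ b ∈ (P p n ls).support, b.2 ≤ elist p ls ∧
        ∀ i ∈ b.1, ∃ s ∈ ls, (i : ℕ) = s ∨ (i : ℕ) + 1 = s) ∧
    ∀ j ≤ ls.length, (P p n ls) (Tset n ls j, elist p (ls.take j)) = (-1 : ZMod p) ^ j := by
  replace hchain := List.isChain_iff_pairwise.mp hchain
  induction ls with
  | nil =>
    constructor
    · intro b hb
      have hb' : b = ((∅ : Finset (Fin (n + 1))), 0) :=
        Finset.mem_singleton.mp (Finsupp.support_single_subset hb)
      subst hb'
      exact ⟨Nat.le_refl 0, fun i hi => absurd hi (Finset.notMem_empty i)⟩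
    · intro j hj
      have hj0 : j = 0 := Nat.le_zero.mp hj
      subst hj0
      simp [P, mup, Tset, elist]
  | cons s t ih =>
    obtain ⟨hlt, hpair⟩ := List.pairwise_cons.mp hchain
    have hs := hmem s (List.mem_cons_self)
    have hmt : ∀ s' ∈ t, 1 ≤ s' ∧ s' ≤ n := fun s' hs' => hmem s' (List.mem_cons_of_mem s hs')
    obtain ⟨ihsupp, ihval⟩ := ih hmt hpair
    set X := P p n t with hX
    have hPc : P p n (s :: t) = mul p n (ebar p n s) X := rfl
    -- every index in the support of X is ≥ s
    have hyt : ∀ b ∈ X.support, ∀ i ∈ b.1, s ≤ (i : ℕ) := by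
      intro b hb i hi
      obtain ⟨s', hs', h⟩ := (ihsupp b hb).2 i hi
      have := hlt s' hs'
      omega
    have hform : ∀ T e, (P p n (s :: t)) (T, e) =
        (if ((s : ℕ) : Fin (n + 1)) ∈ T then X (T.erase ((s : ℕ) : Fin (n + 1)), e) else 0)
        - (if ((s - 1 : ℕ) : Fin (n + 1)) ∈ T ∧ dstep p s ≤ e then
            X (T.erase ((s - 1 : ℕ) : Fin (n + 1)), e - dstep p s) else 0) := by
      intro T e
      rw [hPc]
      exact ebar_mul_apply s hs.2 X hyt T e
    have hvs : (((s : ℕ) : Fin (n + 1)) : ℕ) = s := Fin.val_cast_of_lt (by omega)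
    have hvs1 : (((s - 1 : ℕ) : Fin (n + 1)) : ℕ) = s - 1 := Fin.val_cast_of_lt (by omega)
    have hel : elist p (s :: t) = dstep p s + elist p t := by simp [elist]
    constructor
    · rintro ⟨T, e⟩ hb
      have h := Finsupp.mem_support_iff.mp hb
      rw [hform T e] at h
      have hcases : (if ((s : ℕ) : Fin (n + 1)) ∈ T then
            X (T.erase ((s : ℕ) : Fin (n + 1)), e) else 0) ≠ 0 ∨
          (if ((s - 1 : ℕ) : Fin (n + 1)) ∈ T ∧ dstep p s ≤ e then
            X (T.erase ((s - 1 : ℕ) : Fin (n + 1)), e - dstep p s) else 0) ≠ 0 := by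
        by_contra hcon
        push_neg at hcon
        rw [hcon.1, hcon.2, sub_zero] at h
        exact h rfl
      rcases hcases with h1 | h2
      · have hsT : ((s : ℕ) : Fin (n + 1)) ∈ T := by
          by_contra hn
          rw [if_neg hn] at h1
          exact h1 rfl
        rw [if_pos hsT] at h1
        have hmem' := Finsupp.mem_support_iff.mpr h1
        obtain ⟨he, hidx⟩ := ihsupp _ hmem'
        refine ⟨by rw [hel]; omega, ?_⟩
        intro i hi
        by_cases hieq : i = ((s : ℕ) : Fin (n + 1))
        · exact ⟨s, List.mem_cons_self, Or.inl (by rw [hieq, hvs])⟩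
        · obtain ⟨s', hs', hor⟩ := hidx i (Finset.mem_erase.mpr ⟨hieq, hi⟩)
          exact ⟨s', List.mem_cons_of_mem s hs', hor⟩
      · have hsT : ((s - 1 : ℕ) : Fin (n + 1)) ∈ T ∧ dstep p s ≤ e := by
          by_contra hn
          rw [if_neg hn] at h2
          exact h2 rfl
        rw [if_pos hsT] at h2
        have hmem' := Finsupp.mem_support_iff.mpr h2
        obtain ⟨he, hidx⟩ := ihsupp _ hmem'
        refine ⟨by rw [hel]; omega, ?_⟩
        intro i hi
        by_cases hieq : i = ((s - 1 : ℕ) : Fin (n + 1))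
        · refine ⟨s, List.mem_cons_self, Or.inr ?_⟩
          rw [hieq, hvs1]
          omega
        · obtain ⟨s', hs', hor⟩ := hidx i (Finset.mem_erase.mpr ⟨hieq, hi⟩)
          exact ⟨s', List.mem_cons_of_mem s hs', hor⟩
    · intro j hj
      -- indices appearing in `Tset n t j'` have value ≥ s
      have hTval : ∀ j' (i : Fin (n + 1)), i ∈ Tset n t j' → s ≤ (i : ℕ) := by
        intro j' i hi
        rw [Tset, Finset.mem_union] at hi
        rcases hi with hi | hi
        · rw [List.mem_toFinset, List.mem_map] at hi
          obtain ⟨s', hs', heq⟩ := hi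
          have hs'' := hlt s' (List.mem_of_mem_take hs')
          have : (i : ℕ) = s' - 1 := by
            rw [← heq]
            exact Fin.val_cast_of_lt (by have := (hmt s' (List.mem_of_mem_take hs')).2; omega)
          omega
        · rw [List.mem_toFinset, List.mem_map] at hi
          obtain ⟨s', hs', heq⟩ := hi
          have hs'' := hlt s' (List.mem_of_mem_drop hs')
          have : (i : ℕ) = s' := by
            rw [← heq]
            exact Fin.val_cast_of_lt (by have := (hmt s' (List.mem_of_mem_drop hs')).2; omega)
          omega
      cases j with
      | zero =>
        have hT0 : Tset n (s :: t) 0 = insert ((s : ℕ) : Fin (n + 1)) (Tset n t 0) := by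
          simp only [Tset, List.take_zero, List.drop_zero, List.map_nil, List.toFinset_nil,
            Finset.empty_union, List.map_cons, List.toFinset_cons]
        have hsnotin : ((s : ℕ) : Fin (n + 1)) ∉ Tset n t 0 := by
          intro hcon
          rw [Tset, Finset.mem_union] at hcon
          rcases hcon with hcon | hcon
          · simp at hcon
          · rw [List.mem_toFinset, List.mem_map] at hcon
            obtain ⟨s', hs', heq⟩ := hcon
            rw [List.drop_zero] at hs'
            have hv' : s' = s := by
              have : ((s' : Fin (n + 1)) : ℕ) = s' :=
                Fin.val_cast_of_lt (by have := (hmt s' hs').2; omega)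
              rw [← this, heq, hvs]
            have := hlt s' hs'
            omega
        rw [hT0]
        have htake : elist p ((s :: t).take 0) = 0 := rfl
        rw [htake, hform]
        have hc1 : ((s : ℕ) : Fin (n + 1)) ∈ insert ((s : ℕ) : Fin (n + 1)) (Tset n t 0) :=
          Finset.mem_insert_self _ _
        rw [if_pos hc1, Finset.erase_insert hsnotin]
        have hc2 : ¬(((s - 1 : ℕ) : Fin (n + 1)) ∈ insert ((s : ℕ) : Fin (n + 1)) (Tset n t 0)
            ∧ dstep p s ≤ 0) := by
          rintro ⟨hmem2, -⟩
          rcases Finset.mem_insert.mp hmem2 with heq | hmem3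
          · have : s - 1 = s := by rw [← hvs1, heq, hvs]
            omega
          · have := hTval 0 _ hmem3
            rw [hvs1] at this
            omega
        rw [if_neg hc2, sub_zero]
        have := ihval 0 (Nat.zero_le _)
        rw [List.take_zero] at this
        have htake0 : elist p ([] : List ℕ) = 0 := rfl
        rw [htake0] at this
        rw [this]
      | succ j' =>
        have hj' : j' ≤ t.length := by simpa using hj
        have hT : Tset n (s :: t) (j' + 1)
            = insert ((s - 1 : ℕ) : Fin (n + 1)) (Tset n t j') := by
          simp only [Tset, List.take_succ_cons, List.drop_succ_cons, List.map_cons,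
            List.toFinset_cons, Finset.insert_union]
        have hs1notin : ((s - 1 : ℕ) : Fin (n + 1)) ∉ Tset n t j' := by
          intro hcon
          have := hTval j' _ hcon
          rw [hvs1] at this
          omega
        have htake : elist p ((s :: t).take (j' + 1)) = dstep p s + elist p (t.take j') := by
          simp [elist]
        rw [hT, htake, hform]
        -- first term vanishes
        have hfirst : (if ((s : ℕ) : Fin (n + 1)) ∈ insert ((s - 1 : ℕ) : Fin (n + 1)) (Tset n t j')
            then X ((insert ((s - 1 : ℕ) : Fin (n + 1)) (Tset n t j')).erase ((s : ℕ) : Fin (n + 1)),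
              dstep p s + elist p (t.take j')) else 0) = 0 := by
          split_ifs with hcond
          · by_contra hne
            have hmem' := Finsupp.mem_support_iff.mpr hne
            have hkey := hyt _ hmem' ((s - 1 : ℕ) : Fin (n + 1)) ?side
            · rw [hvs1] at hkey
              omega
            case side =>
              apply Finset.mem_erase.mpr
              constructor
              · intro heq
                have : s - 1 = s := by rw [← hvs1, heq, hvs]
                omega
              · exact Finset.mem_insert_self _ _
          · rfl
        rw [hfirst]
        have hc2 : ((s - 1 : ℕ) : Fin (n + 1)) ∈ insert ((s - 1 : ℕ) : Fin (n + 1)) (Tset n t j')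
            ∧ dstep p s ≤ dstep p s + elist p (t.take j') :=
          ⟨Finset.mem_insert_self _ _, Nat.le_add_right _ _⟩
        rw [if_pos hc2, Finset.erase_insert hs1notin]
        have hexp : dstep p s + elist p (t.take j') - dstep p s = elist p (t.take j') := by omega
        rw [hexp, ihval j' hj', zero_sub, pow_succ]
        ring

/-! ### cap lemmas -/

lemma cap_apply_eq {p n : ℕ} (m : ℕ) (X : A p n) (T : Finset (Fin (n + 1))) (k : ℕ) :
    (cap p n m X) (T, k) = (Nat.choose (k + m) m : ZMod p) * X (T, k + m) := by
  rw [cap, Finsupp.lsum_apply, Finsupp.sum_apply, Finsupp.sum]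
  rw [Finset.sum_eq_single (T, k + m)]
  · simp only [LinearMap.id_coe, id_eq, Finsupp.coe_lsum, LinearMap.toSpanSingleton_apply]
    rw [Finsupp.smul_apply, Finsupp.smul_apply, Finsupp.single_apply]
    have : ((T, k + m - m) : Idx n) = (T, k) := by
      simp
    rw [this, if_pos rfl]
    rw [smul_eq_mul, smul_eq_mul, mul_one, mul_comm]
  · intro b _ hb
    simp only [LinearMap.toSpanSingleton_apply]
    rw [Finsupp.smul_apply, Finsupp.smul_apply, Finsupp.single_apply]
    by_cases hlt : b.2 < m
    · rw [Nat.choose_eq_zero_of_lt hlt]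
      simp
    · have : ¬ ((b.1, b.2 - m) : Idx n) = (T, k) := by
        intro hEq
        apply hb
        have h1 : b.1 = T := (Prod.mk.injEq _ _ _ _ ▸ hEq).1
        have h2 : b.2 - m = k := (Prod.mk.injEq _ _ _ _ ▸ hEq).2
        have : b.2 = k + m := by omega
        rw [← h1, ← this]
      rw [if_neg this]
      simp
  · intro hnot
    rw [Finsupp.notMem_support_iff.mp hnot]
    simp

lemma cap_eq_zero {p n : ℕ} (m : ℕ) (X : A p n)
    (h : ∀ b ∈ X.support, (Nat.choose b.2 m : ZMod p) = 0) : cap p n m X = 0 := by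
  rw [cap, Finsupp.lsum_apply, Finsupp.sum]
  apply Finset.sum_eq_zero
  intro b hb
  simp only [LinearMap.toSpanSingleton_apply]
  rw [h b hb, zero_smul, smul_zero]

/-! ### Number theory lemmas -/

lemma choose_ppow {p : ℕ} (hp : p.Prime) (a m : ℕ) :
    ((Nat.choose a (p ^ m) : ZMod p)) = ((a / p ^ m) % p : ℕ) := by
  haveI : Fact p.Prime := ⟨hp⟩
  induction m generalizing a with
  | zero =>
    simp only [pow_zero, Nat.choose_one_right, Nat.div_one]
    exact (ZMod.natCast_mod a p).symm
  | succ m ih =>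
    have h := (ZMod.natCast_eq_natCast_iff _ _ _).mpr
      (Choose.choose_modEq_choose_mod_mul_choose_div_nat (n := a) (k := p ^ (m + 1)) (p := p))
    rw [h]
    have h1 : p ^ (m + 1) % p = 0 := by
      rw [pow_succ]
      exact Nat.mul_mod_left _ _
    have h2 : p ^ (m + 1) / p = p ^ m := by
      rw [pow_succ]
      exact Nat.mul_div_cancel _ hp.pos
    rw [h1, h2, Nat.choose_zero_right, Nat.cast_mul, Nat.cast_one, one_mul, ih]
    rw [Nat.div_div_eq_div_mul, ← pow_succ']

lemma digit_mod {p n : ℕ} (hp : 0 < p) (l e : ℕ) :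
    ((l + e) / p ^ n) % p = ((l % p ^ (n + 1) + e) / p ^ n) % p := by
  have hpn : 0 < p ^ n := Nat.pow_pos hp
  conv_lhs => rw [← Nat.mod_add_div l (p ^ (n + 1))]
  have : l % p ^ (n + 1) + p ^ (n + 1) * (l / p ^ (n + 1)) + e
      = (l % p ^ (n + 1) + e) + p ^ n * (p * (l / p ^ (n + 1))) := by
    rw [pow_succ]
    ring
  rw [this, Nat.add_mul_div_left _ _ hpn, Nat.add_mul_mod_self_left]

lemma elist_sort (p : ℕ) (S : Finset ℕ) :
    elist p (S.sort (· ≤ ·)) = ∑ s ∈ S, dstep p s := by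
  rw [elist]
  rw [((Finset.sort_perm_toList S (· ≤ ·)).map (dstep p)).sum_eq]
  rw [← Multiset.sum_coe, ← Multiset.map_coe, Finset.coe_toList, Finset.sum]

lemma tele (p n : ℕ) : ∑ s ∈ Finset.Icc 1 n, ((p : ℤ) ^ s - (p : ℤ) ^ (s - 1))
    = (p : ℤ) ^ n - 1 := by
  induction n with
  | zero => simp
  | succ n ihn =>
    rw [Finset.sum_Icc_succ_top (by omega : 1 ≤ n + 1), ihn]
    have : (n + 1) - 1 = n := by omega
    rw [this, pow_succ]
    ring

lemma cast_dstep {p : ℕ} (hp : 1 ≤ p) (s : ℕ) (hs : 1 ≤ s) :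
    ((dstep p s : ℕ) : ℤ) = (p : ℤ) ^ s - (p : ℤ) ^ (s - 1) := by
  rw [dstep]
  have hle : p ^ (s - 1) ≤ p ^ s := Nat.pow_le_pow_right hp (by omega)
  push_cast [hle]
  ring

lemma find_j (p n : ℕ) (hp : 2 ≤ p) (ls : List ℕ) (hmem : ∀ s ∈ ls, 1 ≤ s ∧ s ≤ n)
    (r : ℕ) (hrM : r < p ^ (n + 1)) (hE : elist p ls < p ^ n)
    (hge : p ^ n ≤ r + elist p ls) :
    ∃ j ≤ ls.length, p ^ n ≤ r + elist p (ls.take j) ∧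
      ((r + elist p (ls.take j)) / p ^ n) % p ≠ 0 := by
  have hpn : 0 < p ^ n := Nat.pow_pos (by omega)
  have hM : p ^ (n + 1) = p ^ n * p := pow_succ p n
  have hMc : p * p ^ n = p ^ n * p := Nat.mul_comm _ _
  have hstep : ∀ j < ls.length, elist p (ls.take (j + 1)) < elist p (ls.take j) + p ^ n := by
    intro j hj
    rw [List.take_succ]
    have hget : ls[j]? = some ls[j] := List.getElem?_eq_getElem hj
    rw [hget, Option.toList_some]
    have : elist p (ls.take j ++ [ls[j]]) = elist p (ls.take j) + dstep p ls[j] := by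
      rw [elist, elist, List.map_append, List.sum_append]
      simp [elist, dstep]
    rw [this]
    have hmem' := hmem ls[j] (List.getElem_mem hj)
    have hds : dstep p ls[j] < p ^ n := by
      have h1 : 1 ≤ p ^ (ls[j] - 1) := Nat.one_le_pow _ _ (by omega)
      have h2 : p ^ ls[j] ≤ p ^ n := Nat.pow_le_pow_right (by omega) hmem'.2
      rw [dstep]
      omega
    omega
  by_cases hcase : r + elist p ls < p ^ (n + 1)
  · refine ⟨ls.length, le_rfl, ?_, ?_⟩
    · rw [List.take_length]; exact hge
    · rw [List.take_length]
      set y := r + elist p ls with hy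
      have hq1 : 1 ≤ y / p ^ n := Nat.le_div_iff_mul_le hpn |>.mpr (by omega)
      have hq2 : y / p ^ n < p := Nat.div_lt_iff_lt_mul hpn |>.mpr (by omega)
      rw [Nat.mod_eq_of_lt hq2]
      omega
  · have hex : ∃ j, j < ls.length ∧ (r + elist p (ls.take j) < p ^ (n + 1) ∧
        p ^ (n + 1) ≤ r + elist p (ls.take (j + 1))) := by
      by_contra hcon
      push_neg at hcon
      have hall : ∀ j ≤ ls.length, r + elist p (ls.take j) < p ^ (n + 1) := by
        intro j hj
        induction j with
        | zero =>
          have : elist p (ls.take 0) = 0 := rfl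
          omega
        | succ j ihj =>
          exact hcon j (by omega) (ihj (by omega))
      have := hall ls.length le_rfl
      rw [List.take_length] at this
      omega
    obtain ⟨j, hjlen, hlt2, hge2⟩ := hex
    have hst := hstep j hjlen
    have h2pn : p ^ n * 2 ≤ p ^ n * p := Nat.mul_le_mul_left _ hp
    refine ⟨j, le_of_lt hjlen, by omega, ?_⟩
    set y := r + elist p (ls.take j) with hy
    have hq1 : p - 1 ≤ y / p ^ n := Nat.le_div_iff_mul_le hpn |>.mpr (by
      have : (p - 1) * p ^ n + p ^ n = p ^ n * p := by
        have : (p - 1) * p ^ n + p ^ n = ((p - 1) + 1) * p ^ n := by ring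
        rw [this]
        have : (p - 1) + 1 = p := by omega
        rw [this]
        ring
      omega)
    have hq2 : y / p ^ n < p := Nat.div_lt_iff_lt_mul hpn |>.mpr (by omega)
    have : y / p ^ n = p - 1 := by omega
    rw [this, Nat.mod_eq_of_lt (by omega)]
    omega

/-- For every `S ⊆ {1, …, n}` and every `ℓ ≥ 0`, the element `(ε̄_S μ^ℓ) ∩ c_{p^n}` of `A`
is zero if and only if the remainder of `ℓ` modulo `p^{n+1}` is strictly less than
`p^n + f(S)`; moreover `p^n + f(S) ≥ 1`. -/
theorem ebar_cap_eq_zero_iff (p n : ℕ) (hp : p.Prime) (hn : 1 ≤ n) (S : Finset ℕ)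
    (hS : S ⊆ Finset.Icc 1 n) (l : ℕ) :
    (cap p n (p ^ n) (mul p n (ebarProd p n S) (mup p n l)) = 0 ↔
      ((l % p ^ (n + 1) : ℕ) : ℤ) < (p : ℤ) ^ n + fS p S) ∧
    1 ≤ (p : ℤ) ^ n + fS p S := by
  haveI : Fact p.Prime := ⟨hp⟩
  have hp2 : 2 ≤ p := hp.two_le
  set ls := S.sort (· ≤ ·) with hls
  have hchain : ls.Chain' (· < ·) := List.isChain_iff_pairwise.mpr (Finset.sortedLT_sort S).pairwise
  have hmem : ∀ s ∈ ls, 1 ≤ s ∧ s ≤ n := by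
    intro s hsmem
    rw [hls, Finset.mem_sort] at hsmem
    exact Finset.mem_Icc.mp (hS hsmem)
  obtain ⟨msupp, mval⟩ := master p n ls hchain hmem
  have hprod : ebarProd p n S = P p n ls := rfl
  set E := elist p ls with hE
  have hcastE : (E : ℤ) = ∑ s ∈ S, ((p : ℤ) ^ s - (p : ℤ) ^ (s - 1)) := by
    rw [hE, hls, elist_sort, Nat.cast_sum]
    exact Finset.sum_congr rfl fun s hsmem =>
      cast_dstep (by omega) s (Finset.mem_Icc.mp (hS hsmem)).1
  have hfS : fS p S = -(E : ℤ) := by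
    rw [fS, hcastE, ← Finset.sum_neg_distrib]
    exact Finset.sum_congr rfl fun s _ => by ring
  have hppos : (1 : ℤ) ≤ (p : ℤ) := by exact_mod_cast (by omega : 1 ≤ p)
  have hEbound : (E : ℤ) ≤ (p : ℤ) ^ n - 1 := by
    rw [hcastE, ← tele p n]
    apply Finset.sum_le_sum_of_subset_of_nonneg hS
    intro s _ _
    have : (p : ℤ) ^ (s - 1) ≤ (p : ℤ) ^ s := pow_le_pow_right₀ hppos (by omega)
    linarith
  have hsecond : 1 ≤ (p : ℤ) ^ n + fS p S := by
    rw [hfS]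
    linarith
  refine ⟨?_, hsecond⟩
  have hcastpn : ((p ^ n : ℕ) : ℤ) = (p : ℤ) ^ n := by push_cast; ring
  have hEnat : E < p ^ n := by
    have h1 : (E : ℤ) < ((p ^ n : ℕ) : ℤ) := by rw [hcastpn]; linarith
    exact_mod_cast h1
  set r := l % p ^ (n + 1) with hr
  have hMpos : 0 < p ^ (n + 1) := Nat.pow_pos (by omega)
  have hrM : r < p ^ (n + 1) := Nat.mod_lt _ hMpos
  have hrl : r ≤ l := Nat.mod_le _ _
  have hiff2 : (((r : ℕ) : ℤ) < (p : ℤ) ^ n + fS p S) ↔ r + E < p ^ n := by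
    rw [hfS, ← hcastpn]
    omega
  rw [hiff2]
  have hginj : Function.Injective (fun b : Idx n => ((b.1, b.2 + l) : Idx n)) := by
    intro b c hbc
    have h1 : b.1 = c.1 := (Prod.mk.injEq _ _ _ _ ▸ hbc).1
    have h2 : b.2 + l = c.2 + l := (Prod.mk.injEq _ _ _ _ ▸ hbc).2
    exact Prod.ext h1 (by omega)
  have hX : mul p n (ebarProd p n S) (mup p n l)
      = Finsupp.mapDomain (fun b : Idx n => ((b.1, b.2 + l) : Idx n)) (P p n ls) := by
    rw [hprod, mul_mup]
  rw [hX]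
  constructor
  · intro h0
    by_contra hge
    push_neg at hge
    obtain ⟨j, hjle, hjpn, hjdig⟩ := find_j p n hp2 ls hmem r hrM hEnat hge
    set ej := elist p (ls.take j) with hej
    have hval : (Finsupp.mapDomain (fun b : Idx n => ((b.1, b.2 + l) : Idx n)) (P p n ls))
        (Tset n ls j, ej + l) = (-1 : ZMod p) ^ j :=
      (Finsupp.mapDomain_apply hginj (P p n ls) (Tset n ls j, ej)).trans (mval j hjle)
    have hcapval := cap_apply_eq (p ^ n)
      (Finsupp.mapDomain (fun b : Idx n => ((b.1, b.2 + l) : Idx n)) (P p n ls))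
      (Tset n ls j) (ej + l - p ^ n)
    have hple : p ^ n ≤ ej + l := by omega
    have heq : ej + l - p ^ n + p ^ n = ej + l := by omega
    rw [heq, hval, h0] at hcapval
    have hzero : (0 : ZMod p) = (Nat.choose (ej + l) (p ^ n) : ZMod p) * (-1 : ZMod p) ^ j := by
      simpa using hcapval
    have hC : ((Nat.choose (ej + l) (p ^ n) : ℕ) : ZMod p)
        = (((ej + l) / p ^ n % p : ℕ) : ZMod p) := by rw [choose_ppow hp]
    have hdigeq : ((ej + l) / p ^ n) % p = ((r + ej) / p ^ n) % p := by
      rw [Nat.add_comm ej l, digit_mod (by omega : 0 < p) l ej]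
    have hCne : ((Nat.choose (ej + l) (p ^ n) : ℕ) : ZMod p) ≠ 0 := by
      rw [hC, hdigeq]
      intro hcon
      rw [ZMod.natCast_eq_zero_iff] at hcon
      have hlt : (r + ej) / p ^ n % p < p := Nat.mod_lt _ (by omega)
      have := Nat.le_of_dvd (Nat.pos_of_ne_zero hjdig) hcon
      omega
    have hpow : ((-1 : ZMod p) ^ j) ≠ 0 := pow_ne_zero _ (by
      intro hcon
      have : (1 : ZMod p) = 0 := by
        rw [← neg_neg (1 : ZMod p), hcon, neg_zero]
      exact one_ne_zero this)
    exact (mul_ne_zero hCne hpow) hzero.symm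
  · intro hlt
    apply cap_eq_zero
    intro b hb
    obtain ⟨a, hamem, hab⟩ := Finset.mem_image.mp (Finsupp.mapDomain_support hb)
    have hae : a.2 ≤ E := (msupp a hamem).1
    have hb2 : b.2 = a.2 + l := by rw [← hab]
    rw [hb2, choose_ppow hp]
    have hdigeq : ((a.2 + l) / p ^ n) % p = ((r + a.2) / p ^ n) % p := by
      rw [Nat.add_comm a.2 l, digit_mod (by omega : 0 < p) l a.2]
    rw [hdigeq]
    have hdiv0 : (r + a.2) / p ^ n = 0 := Nat.div_eq_of_lt (by omega)
    rw [hdiv0]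
    simp
end

section
/- For every pair of integers (d, w), the 𝔽_p-codimension of the bidegree-(d, w) homogeneous component of K inside the bidegree-(d, w) homogeneous component of A equals the number of pairs (S, k) with S ⊆ {0, 1, …, n}, k an integer ≥ 0, Σ_{i∈S}(2p^i − 1) + 2k = d and −|S| = w, such that either the remainder of k modulo p^{n+1} is at least p^n, or the remainder of k modulo p^{n+1} is at most p^n − 1 and n ∈ S. -/
/-- The (topological) degree of the basis monomial `ε_S μ^k`: `Σ_{i∈S} (2p^i − 1) + 2k`. -/
noncomputable def degIdx (p n : ℕ) (b : Idx n) : ℤ :=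
  (∑ i ∈ b.1, (2 * (p : ℤ) ^ (i : ℕ) - 1)) + 2 * (b.2 : ℤ)

/-- The Adams weight of the basis monomial `ε_S μ^k`: `−|S|`. -/
noncomputable def wtIdx (n : ℕ) (b : Idx n) : ℤ := -(b.1.card : ℤ)

/-- The bidegree-`(d, w)` homogeneous component of `A`: the span of the basis monomials
of degree `d` and Adams weight `w`. -/
noncomputable def Acomp (p n : ℕ) (d w : ℤ) : Submodule (ZMod p) (A p n) :=
  Submodule.span (ZMod p)
    {x | ∃ b : Idx n, degIdx p n b = d ∧ wtIdx n b = w ∧ x = Finsupp.single b (1 : ZMod p)}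

/-- `K`: the intersection of the kernels of `x ↦ x ∩ c_{p^n}` and `x ↦ σ(x) ∩ c_{p^n}`. -/
noncomputable def Kker (p n : ℕ) : Submodule (ZMod p) (A p n) :=
  LinearMap.ker (cap p n (p ^ n)) ⊓ LinearMap.ker ((cap p n (p ^ n)).comp (sigma p n))



section Lucas
variable (p : ℕ)

lemma choose_pow_cast (hp : p.Prime) : ∀ (N m : ℕ),
    ((m.choose (p ^ N) : ZMod p)) = ((m / p ^ N : ℕ) : ZMod p) := by
  haveI : Fact p.Prime := ⟨hp⟩
  intro N
  induction N with
  | zero => intro m; simp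
  | succ N ih =>
    intro m
    have h := (Choose.choose_modEq_choose_mod_mul_choose_div_nat (p := p) (n := m)
      (k := p ^ (N + 1)))
    have h2 : (m.choose (p ^ (N + 1)) : ZMod p) =
        (((m % p).choose (p ^ (N + 1) % p) * ((m / p).choose (p ^ (N + 1) / p)) : ℕ) : ZMod p) :=
      (ZMod.natCast_eq_natCast_iff _ _ _).mpr h
    have hmod : p ^ (N + 1) % p = 0 := by
      rw [pow_succ']; exact Nat.mul_mod_right _ _
    have hdiv : p ^ (N + 1) / p = p ^ N := by
      rw [pow_succ]; exact Nat.mul_div_cancel _ hp.pos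
    rw [hmod, hdiv] at h2
    rw [h2]
    push_cast
    rw [Nat.choose_zero_right, ih (m / p), Nat.div_div_eq_div_mul, ← pow_succ']
    simp

lemma choose_pow_digit (hp : p.Prime) (n m : ℕ) :
    ((m.choose (p ^ n) : ZMod p)) = ((m % p ^ (n + 1) / p ^ n : ℕ) : ZMod p) := by
  rw [choose_pow_cast p hp n m]
  have h : m % p ^ (n + 1) / p ^ n = m / p ^ n % p := by
    rw [pow_succ]; exact Nat.mod_mul_right_div_self m (p ^ n) p
  rw [h, ZMod.natCast_mod]

end Lucas

section BFin

variable (p n : ℕ) (d w : ℤ)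

def bad (p n : ℕ) (q : Idx n) : Prop :=
  p ^ n ≤ q.2 % p ^ (n + 1) ∨ (q.2 % p ^ (n + 1) ≤ p ^ n - 1 ∧ Fin.last n ∈ q.1)

instance : DecidablePred (bad p n) := fun q => by unfold bad; infer_instance

noncomputable def Bfin : Finset (Idx n) :=
  (Finset.univ.image fun S : Finset (Fin (n + 1)) =>
    (S, ((d - ∑ i ∈ S, (2 * (p : ℤ) ^ (i : ℕ) - 1)) / 2).toNat)).filter
    (fun q => degIdx p n q = d ∧ wtIdx n q = w)

lemma mem_Bfin (q : Idx n) : q ∈ Bfin p n d w ↔ degIdx p n q = d ∧ wtIdx n q = w := by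
  constructor
  · intro hq
    exact (Finset.mem_filter.mp hq).2
  · intro hq
    refine Finset.mem_filter.mpr ⟨Finset.mem_image.mpr ⟨q.1, Finset.mem_univ _, ?_⟩, hq⟩
    have h1 : d - ∑ i ∈ q.1, (2 * (p : ℤ) ^ (i : ℕ) - 1) = 2 * (q.2 : ℤ) := by
      have := hq.1; unfold degIdx at this; omega
    rw [h1]
    have : (2 * (q.2 : ℤ)) / 2 = (q.2 : ℤ) := by omega
    rw [this]
    simp

/-- key injectivity: a basis index in `Bfin` is determined by its first component -/
lemma Bfin_fst_inj {q q' : Idx n} (hq : q ∈ Bfin p n d w) (hq' : q' ∈ Bfin p n d w)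
    (h : q.1 = q'.1) : q = q' := by
  rw [mem_Bfin] at hq hq'
  have h1 := hq.1; have h2 := hq'.1
  unfold degIdx at h1 h2
  rw [h] at h1
  have : (q.2 : ℤ) = q'.2 := by omega
  have : q.2 = q'.2 := by exact_mod_cast this
  exact Prod.ext h this

lemma single_mem_Acomp {q : Idx n} (hq : q ∈ Bfin p n d w) :
    Finsupp.single q (1 : ZMod p) ∈ Acomp p n d w := by
  rw [mem_Bfin] at hq
  exact Submodule.subset_span ⟨q, hq.1, hq.2, rfl⟩

lemma Acomp_eq_span : Acomp p n d w =
    Submodule.span (ZMod p) ((fun b => Finsupp.single b (1 : ZMod p)) '' (Bfin p n d w : Set (Idx n))) := by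
  unfold Acomp
  congr 1
  ext x
  simp only [Set.mem_setOf_eq, Set.mem_image, Finset.mem_coe, mem_Bfin]
  constructor
  · rintro ⟨b, h1, h2, rfl⟩; exact ⟨b, ⟨h1, h2⟩, rfl⟩
  · rintro ⟨b, ⟨h1, h2⟩, rfl⟩; exact ⟨b, h1, h2, rfl⟩

lemma finrank_Acomp (hp : p.Prime) :
    Module.finrank (ZMod p) (Acomp p n d w) = (Bfin p n d w).card := by
  haveI : Fact p.Prime := ⟨hp⟩
  rw [Acomp_eq_span]
  set s : Set (A p n) := (fun b => Finsupp.single b (1 : ZMod p)) '' (Bfin p n d w : Set (Idx n)) with hs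
  have hinj : Set.InjOn (fun b : Idx n => Finsupp.single b (1 : ZMod p)) (Bfin p n d w : Set (Idx n)) := by
    intro a _ b _ hab
    exact Finsupp.single_left_injective one_ne_zero hab
  haveI : Fintype s := (Set.Finite.image _ (Finset.finite_toSet _)).fintype
  have hli : LinearIndependent (ZMod p) ((↑) : s → A p n) := by
    have hbig : LinearIndependent (ZMod p)
        ((↑) : Set.range (fun b : Idx n => Finsupp.single b (1 : ZMod p)) → A p n) := by
      have := (Finsupp.basisSingleOne (R := ZMod p) (ι := Idx n)).linearIndependent
      have h2 := (linearIndepOn_id_range_iff this.injective).mpr this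
      rw [Finsupp.coe_basisSingleOne] at h2
      exact h2
    exact LinearIndepOn.mono (v := id)
      (s := Set.range (fun b : Idx n => Finsupp.single b (1 : ZMod p))) hbig (by rw [hs]; exact Set.image_subset_range _ _)
  rw [finrank_span_set_eq_card hli]
  rw [Set.toFinset_image]
  rw [Finset.card_image_of_injOn (by simpa using hinj)]
  simp
end BFin

section Ops

variable (p n m : ℕ)

lemma cap_single (b : Idx n) (c : ZMod p) :
    cap p n m (Finsupp.single b c) =
      (c * (Nat.choose b.2 m : ZMod p)) • Finsupp.single (b.1, b.2 - m) (1 : ZMod p) := by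
  rw [cap, Finsupp.lsum_single, LinearMap.toSpanSingleton_apply, smul_smul]

lemma sigma_single (b : Idx n) (c : ZMod p) :
    sigma p n (Finsupp.single b c) =
      ∑ s ∈ b.1, (c * (-1 : ZMod p) ^ (b.1.filter (· < s)).card) •
        Finsupp.single (b.1.erase s, b.2 + p ^ (s : ℕ)) (1 : ZMod p) := by
  rw [sigma, Finsupp.lsum_single, LinearMap.toSpanSingleton_apply, Finset.smul_sum]
  simp_rw [smul_smul]

lemma capSigma_single (b : Idx n) (c : ZMod p) :
    cap p n m (sigma p n (Finsupp.single b c)) =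
      ∑ s ∈ b.1, (c * (-1 : ZMod p) ^ (b.1.filter (· < s)).card *
          (Nat.choose (b.2 + p ^ (s : ℕ)) m : ZMod p)) •
        Finsupp.single (b.1.erase s, b.2 + p ^ (s : ℕ) - m) (1 : ZMod p) := by
  rw [sigma_single, map_sum]
  refine Finset.sum_congr rfl fun s _ => ?_
  rw [LinearMap.map_smul, cap_single, smul_smul]
  ring_nf

/-- pointwise formula for `cap` -/
lemma cap_apply_coeff (x : A p n) (c : Idx n) :
    cap p n m x c = x.sum fun b a =>
      a * (Nat.choose b.2 m : ZMod p) * (if (b.1, b.2 - m) = c then 1 else 0) := by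
  rw [cap, Finsupp.lsum_apply, Finsupp.sum_apply]
  refine Finset.sum_congr rfl fun b _ => ?_
  dsimp only
  rw [LinearMap.toSpanSingleton_apply, smul_smul, Finsupp.smul_apply, Finsupp.single_apply,
    smul_eq_mul]

lemma capSigma_apply_coeff (x : A p n) (c : Idx n) :
    cap p n m (sigma p n x) c = x.sum fun b a =>
      ∑ s ∈ b.1, (a * (-1 : ZMod p) ^ (b.1.filter (· < s)).card *
          (Nat.choose (b.2 + p ^ (s : ℕ)) m : ZMod p)) *
        (if (b.1.erase s, b.2 + p ^ (s : ℕ) - m) = c then 1 else 0) := by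
  have hx : x = x.sum fun b a => Finsupp.single b a := (Finsupp.sum_single x).symm
  conv_lhs => rw [hx]
  rw [Finsupp.sum, map_sum, map_sum, Finsupp.finset_sum_apply]
  rw [Finsupp.sum]
  refine Finset.sum_congr rfl fun b hb => ?_
  rw [capSigma_single, Finsupp.finset_sum_apply]
  refine Finset.sum_congr rfl fun s _ => ?_
  rw [Finsupp.smul_apply, Finsupp.single_apply, smul_eq_mul]

end Ops

section Kernel
variable {p n : ℕ} {d w : ℤ}

/-- elements of `Acomp` are supported on `Bfin` -/
lemma coeff_of_mem_Acomp {x : A p n} (hx : x ∈ Acomp p n d w) {b : Idx n} (hb : x b ≠ 0) :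
    b ∈ Bfin p n d w := by
  have hle : Acomp p n d w ≤ Finsupp.supported (ZMod p) (ZMod p) {q | q ∈ Bfin p n d w} := by
    rw [Acomp]
    refine Submodule.span_le.mpr ?_
    rintro y ⟨b', h1, h2, rfl⟩
    rw [SetLike.mem_coe, Finsupp.mem_supported]
    refine subset_trans Finsupp.support_single_subset ?_
    intro q hq
    have hqb : q = b' := Finset.mem_singleton.mp hq
    subst hqb
    exact (mem_Bfin p n d w q).mpr ⟨h1, h2⟩
  have := (Finsupp.mem_supported' _ _).mp (hle hx) b
  by_contra hmem
  exact hb (this hmem)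

/-- if `x ∈ ker (cap c_{p^n})` then coefficients at monomials with nonvanishing binomial
coefficient vanish -/
lemma kerCap_coeff (hp : p.Prime) {x : A p n} (hx : cap p n (p ^ n) x = 0) (b : Idx n)
    (hb : (Nat.choose b.2 (p ^ n) : ZMod p) ≠ 0) : x b = 0 := by
  have hge : p ^ n ≤ b.2 := by
    by_contra h
    push_neg at h
    rw [Nat.choose_eq_zero_of_lt h] at hb
    exact hb (by simp)
  have h0 : cap p n (p ^ n) x (b.1, b.2 - p ^ n) = 0 := by rw [hx]; rfl
  rw [cap_apply_coeff, Finsupp.sum] at h0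
  have hsum : ∑ b' ∈ x.support,
      (x b' * (Nat.choose b'.2 (p ^ n) : ZMod p) *
        (if (b'.1, b'.2 - p ^ n) = (b.1, b.2 - p ^ n) then 1 else 0)) =
      x b * (Nat.choose b.2 (p ^ n) : ZMod p) *
        (if (b.1, b.2 - p ^ n) = (b.1, b.2 - p ^ n) then (1 : ZMod p) else 0) := by
    apply Finset.sum_eq_single
    · intro b' _ hne
      by_cases hC : (Nat.choose b'.2 (p ^ n) : ZMod p) = 0
      · rw [hC]; ring
      · have hge' : p ^ n ≤ b'.2 := by
          by_contra h
          push_neg at h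
          rw [Nat.choose_eq_zero_of_lt h] at hC
          exact hC (by simp)
        rw [if_neg, mul_zero]
        intro heq
        rw [Prod.mk.injEq] at heq
        apply hne
        refine Prod.ext heq.1 ?_
        omega
    · intro hb'
      rw [Finsupp.notMem_support_iff.mp hb']
      ring
  haveI : Fact p.Prime := ⟨hp⟩
  rw [hsum, if_pos rfl, mul_one] at h0
  rcases mul_eq_zero.mp h0 with h | h
  · exact h
  · exact absurd h hb

/-- if `x` is supported on monomials containing `ε_n` with vanishing binomial coefficient,
and `cap (sigma x) = 0`, then `x = 0`. -/
lemma kerT_eq_zero (hp : p.Prime) {x : A p n}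
    (hsupp : ∀ b : Idx n, x b ≠ 0 →
      Fin.last n ∈ b.1 ∧ (Nat.choose b.2 (p ^ n) : ZMod p) = 0)
    (hx : cap p n (p ^ n) (sigma p n x) = 0) : x = 0 := by
  haveI : Fact p.Prime := ⟨hp⟩
  ext b
  rw [Finsupp.coe_zero, Pi.zero_apply]
  by_contra hb0
  obtain ⟨hlast, hC⟩ := hsupp b hb0
  have h0 : cap p n (p ^ n) (sigma p n x) (b.1.erase (Fin.last n), b.2) = 0 := by rw [hx]; rfl
  rw [capSigma_apply_coeff, Finsupp.sum] at h0
  -- the only contribution is from `b` itself, via `s = Fin.last n`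
  have hsum : ∑ b' ∈ x.support, (∑ s ∈ b'.1,
      (x b' * (-1 : ZMod p) ^ (b'.1.filter (· < s)).card *
          (Nat.choose (b'.2 + p ^ (s : ℕ)) (p ^ n) : ZMod p)) *
        (if (b'.1.erase s, b'.2 + p ^ (s : ℕ) - p ^ n) = (b.1.erase (Fin.last n), b.2)
          then 1 else 0)) =
      x b * (-1 : ZMod p) ^ (b.1.filter (· < Fin.last n)).card *
          (Nat.choose (b.2 + p ^ n) (p ^ n) : ZMod p) := by
    rw [Finset.sum_eq_single b]
    · rw [Finset.sum_eq_single (Fin.last n)]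
      · simp [Fin.val_last]
      · intro s hs hne
        rw [if_neg, mul_zero]
        intro heq
        rw [Prod.mk.injEq] at heq
        have : Fin.last n ∈ b.1.erase s := Finset.mem_erase.mpr ⟨Ne.symm hne, hlast⟩
        rw [heq.1] at this
        exact absurd (Finset.mem_erase.mp this).1 (by simp)
      · intro habs
        exact absurd hlast habs
    · intro b' hb' hne
      refine Finset.sum_eq_zero fun s hs => ?_
      have hlast' : Fin.last n ∈ b'.1 := (hsupp b' (Finsupp.mem_support_iff.mp hb')).1
      rw [if_neg, mul_zero]
      intro heq
      rw [Prod.mk.injEq] at heq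
      by_cases hsl : s = Fin.last n
      · subst hsl
        apply hne
        have h1 : b'.1 = b.1 := by
          have := heq.1
          have e1 : insert (Fin.last n) (b'.1.erase (Fin.last n)) = b'.1 :=
            Finset.insert_erase hlast'
          have e2 : insert (Fin.last n) (b.1.erase (Fin.last n)) = b.1 :=
            Finset.insert_erase hlast
          rw [← e1, ← e2, this]
        have h2 : b'.2 = b.2 := by
          have h3 := heq.2
          rw [Fin.val_last] at h3
          omega
        exact Prod.ext h1 h2
      · have : Fin.last n ∈ b'.1.erase s := Finset.mem_erase.mpr ⟨fun h => hsl h.symm, hlast'⟩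
        rw [heq.1] at this
        exact absurd (Finset.mem_erase.mp this).1 (by simp)
    · intro habs
      rw [Finsupp.notMem_support_iff.mp habs]
      exact Finset.sum_eq_zero fun s _ => by ring
  rw [hsum] at h0
  -- the binomial coefficient is 1
  have hCval : (Nat.choose (b.2 + p ^ n) (p ^ n) : ZMod p) = 1 := by
    rw [choose_pow_cast p hp n] at hC ⊢
    rw [Nat.add_div_right _ (pow_pos hp.pos n)]
    push_cast
    rw [hC]
    ring
  rw [hCval, mul_one] at h0
  rcases mul_eq_zero.mp h0 with h | h
  · exact hb0 h
  · exact absurd h (pow_ne_zero _ (neg_ne_zero.mpr one_ne_zero))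

end Kernel

section Count
variable (p n : ℕ) (d w : ℤ)

noncomputable def Dfin : Finset (Idx n) := (Bfin p n d w).filter (fun q => ¬ bad p n q)
noncomputable def Ufin : Finset (Idx n) := (Bfin p n d w).filter (bad p n)

variable {p n}

lemma choose_eq_zero_iff (hp : p.Prime) (k : ℕ) :
    (Nat.choose k (p ^ n) : ZMod p) = 0 ↔ k % p ^ (n + 1) < p ^ n := by
  haveI : Fact p.Prime := ⟨hp⟩
  rw [choose_pow_digit p hp n k, ZMod.natCast_eq_zero_iff]
  have hlt : k % p ^ (n + 1) / p ^ n < p := by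
    rw [Nat.div_lt_iff_lt_mul (pow_pos hp.pos n), ← pow_succ']
    exact Nat.mod_lt _ (pow_pos hp.pos _)
  constructor
  · intro hdvd
    exact (Nat.div_eq_zero_iff.mp (Nat.eq_zero_of_dvd_of_lt hdvd hlt)).resolve_left (pow_pos hp.pos n).ne'
  · intro hlt'
    rw [Nat.div_eq_of_lt hlt']
    exact dvd_zero p

lemma not_bad_iff (hp : p.Prime) (q : Idx n) :
    ¬ bad p n q ↔ ((Nat.choose q.2 (p ^ n) : ZMod p) = 0 ∧ Fin.last n ∉ q.1) := by
  have h1 : 1 ≤ p ^ n := Nat.one_le_pow _ _ hp.pos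
  rw [choose_eq_zero_iff hp]
  unfold bad
  constructor
  · intro h
    push_neg at h
    obtain ⟨ha, hb⟩ := h
    have hlt : q.2 % p ^ (n + 1) < p ^ n := by omega
    exact ⟨hlt, hb (by omega)⟩
  · rintro ⟨ha, hb⟩
    push_neg
    exact ⟨by omega, fun _ => hb⟩

lemma bad_of_mem_insert_last (hp : p.Prime) (q : Idx n) (h1 : Fin.last n ∈ q.1)
    (h2 : q.2 % p ^ (n + 1) < p ^ n) : bad p n q := by
  right
  exact ⟨by omega, h1⟩

lemma finrank_inf_le (hp : p.Prime) :
    Module.finrank (ZMod p) ↥(Kker p n ⊓ Acomp p n d w) ≤ (Dfin p n d w).card := by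
  haveI : Fact p.Prime := ⟨hp⟩
  set V := Kker p n ⊓ Acomp p n d w with hV
  let φ : V →ₗ[ZMod p] (↥(Dfin p n d w) → ZMod p) :=
    (LinearMap.pi fun q : ↥(Dfin p n d w) => Finsupp.lapply q.val).comp V.subtype
  have hinj : Function.Injective φ := by
    rw [← LinearMap.ker_eq_bot, LinearMap.ker_eq_bot']
    intro x hx0
    have hmem : (x : A p n) ∈ Kker p n ⊓ Acomp p n d w := x.2
    rw [Submodule.mem_inf] at hmem
    obtain ⟨hK, hA⟩ := hmem
    rw [Kker, Submodule.mem_inf] at hK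
    obtain ⟨hK1, hK2⟩ := hK
    rw [LinearMap.mem_ker] at hK1 hK2
    rw [LinearMap.comp_apply] at hK2
    have hcoord : ∀ q : Idx n, q ∈ Dfin p n d w → (x : A p n) q = 0 := by
      intro q hq
      have h2 : φ x ⟨q, hq⟩ = 0 := by rw [hx0]; rfl
      simpa [φ, Finsupp.lapply_apply] using h2
    have hzero : (x : A p n) = 0 := by
      refine kerT_eq_zero hp ?_ hK2
      intro b hb
      have hB : b ∈ Bfin p n d w := coeff_of_mem_Acomp hA hb
      have hC : (Nat.choose b.2 (p ^ n) : ZMod p) = 0 := by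
        by_contra hC0
        exact hb (kerCap_coeff hp hK1 b hC0)
      refine ⟨?_, hC⟩
      by_contra hlast
      have hnb : ¬ bad p n b := (not_bad_iff hp b).mpr ⟨hC, hlast⟩
      exact hb (hcoord b (Finset.mem_filter.mpr ⟨hB, hnb⟩))
    exact Subtype.ext hzero
  calc Module.finrank (ZMod p) V ≤
      Module.finrank (ZMod p) (↥(Dfin p n d w) → ZMod p) :=
        LinearMap.finrank_le_finrank_of_injective hinj
    _ = (Dfin p n d w).card := by
        rw [Module.finrank_pi]
        exact Fintype.card_coe _

end Count

section Vb
variable (p n : ℕ)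

noncomputable def Car (q : Idx n) : Finset (Fin (n + 1)) :=
  q.1.filter (fun s => p ^ n ≤ q.2 % p ^ n + p ^ (s : ℕ))

noncomputable def bmap (q : Idx n) (s : Fin (n + 1)) : Idx n :=
  (insert (Fin.last n) (q.1.erase s), q.2 + p ^ (s : ℕ) - p ^ n)

noncomputable def vb (q : Idx n) : A p n :=
  Finsupp.single q 1 + ∑ s ∈ Car p n q,
    ((-1 : ZMod p) ^ ((q.1.filter (· < s)).card + q.1.card)) • Finsupp.single (bmap p n q s) 1

variable {p n}

lemma mod_pn_eq {k : ℕ} (hk : k % p ^ (n + 1) < p ^ n) : k % p ^ n = k % p ^ (n + 1) := by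
  conv_lhs => rw [← Nat.mod_mod_of_dvd k (pow_dvd_pow p (Nat.le_succ n))]
  exact Nat.mod_eq_of_lt hk

lemma two_pow_le (hp : p.Prime) : 2 * p ^ n ≤ p ^ (n + 1) := by
  rw [pow_succ']
  exact Nat.mul_le_mul_right _ hp.two_le

lemma add_pow_mod (hp : p.Prime) {k : ℕ} (hk : k % p ^ (n + 1) < p ^ n) {j : ℕ} (hj : j ≤ n) :
    (k + p ^ j) % p ^ (n + 1) = k % p ^ n + p ^ j := by
  have hpj : p ^ j ≤ p ^ n := Nat.pow_le_pow_right hp.one_lt.le hj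
  have ha := Nat.div_add_mod k (p ^ (n + 1))
  have h2 : k % p ^ (n + 1) + p ^ j < p ^ (n + 1) := by
    have := two_pow_le (n := n) hp
    omega
  have hk2 : k + p ^ j = (k % p ^ (n + 1) + p ^ j) + p ^ (n + 1) * (k / p ^ (n + 1)) := by omega
  rw [hk2, Nat.add_mul_mod_self_left, Nat.mod_eq_of_lt h2, mod_pn_eq hk]

lemma sub_pow_mod (hp : p.Prime) {k : ℕ} (hk : k % p ^ (n + 1) < p ^ n) {j : ℕ} (hj : j ≤ n)
    (hcar : p ^ n ≤ k % p ^ n + p ^ j) :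
    (k + p ^ j - p ^ n) % p ^ (n + 1) = k % p ^ n + p ^ j - p ^ n := by
  have hpj : p ^ j ≤ p ^ n := Nat.pow_le_pow_right hp.one_lt.le hj
  have ha := Nat.div_add_mod k (p ^ (n + 1))
  have hr : k % p ^ n = k % p ^ (n + 1) := mod_pn_eq hk
  have hlt : p ^ n < p ^ (n + 1) := Nat.pow_lt_pow_right hp.one_lt (Nat.lt_succ_self n)
  have hk2 : k + p ^ j - p ^ n =
      (k % p ^ (n + 1) + p ^ j - p ^ n) + p ^ (n + 1) * (k / p ^ (n + 1)) := by omega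
  rw [hk2, Nat.add_mul_mod_self_left, Nat.mod_eq_of_lt (by omega), hr]

/-- the binomial coefficient equals 1 for carry positions -/
lemma choose_car_one (hp : p.Prime) {k : ℕ} (hk : k % p ^ (n + 1) < p ^ n) {j : ℕ} (hj : j ≤ n)
    (hcar : p ^ n ≤ k % p ^ n + p ^ j) :
    ((k + p ^ j).choose (p ^ n) : ZMod p) = 1 := by
  rw [choose_pow_digit p hp, add_pow_mod hp hk hj]
  have hpj : p ^ j ≤ p ^ n := Nat.pow_le_pow_right hp.one_lt.le hj
  have hrlt : k % p ^ n < p ^ n := Nat.mod_lt _ (pow_pos hp.pos n)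
  have h1 : (k % p ^ n + p ^ j) / p ^ n = 1 :=
    Nat.div_eq_of_lt_le (by omega) (by omega)
  rw [h1, Nat.cast_one]

/-- the binomial coefficient vanishes for non-carry positions -/
lemma choose_notcar_zero (hp : p.Prime) {k : ℕ} (hk : k % p ^ (n + 1) < p ^ n) {j : ℕ}
    (hj : j ≤ n) (hncar : k % p ^ n + p ^ j < p ^ n) :
    ((k + p ^ j).choose (p ^ n) : ZMod p) = 0 := by
  rw [choose_pow_digit p hp, add_pow_mod hp hk hj, Nat.div_eq_of_lt hncar, Nat.cast_zero]

/-- the corrected monomial has vanishing digit -/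
lemma ks_mod_lt (hp : p.Prime) {k : ℕ} (hk : k % p ^ (n + 1) < p ^ n) {j : ℕ} (hj : j < n)
    (hcar : p ^ n ≤ k % p ^ n + p ^ j) :
    (k + p ^ j - p ^ n) % p ^ (n + 1) < p ^ j := by
  rw [sub_pow_mod hp hk (le_of_lt hj) hcar]
  have hrlt : k % p ^ n < p ^ n := Nat.mod_lt _ (pow_pos hp.pos n)
  omega

/-- binomial coefficients of further `σ`-terms of corrected monomials vanish -/
lemma choose_bs_zero (hp : p.Prime) {k : ℕ} (hk : k % p ^ (n + 1) < p ^ n) {j t : ℕ}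
    (hj : j < n) (ht : t < n) (hcar : p ^ n ≤ k % p ^ n + p ^ j) :
    (((k + p ^ j - p ^ n) + p ^ t).choose (p ^ n) : ZMod p) = 0 := by
  have hj' : p ^ j ≤ p ^ (n - 1) := Nat.pow_le_pow_right hp.one_lt.le (by omega)
  have ht' : p ^ t ≤ p ^ (n - 1) := Nat.pow_le_pow_right hp.one_lt.le (by omega)
  have h2 : 2 * p ^ (n - 1) ≤ p ^ n := by
    have : p ^ n = p ^ (n - 1) * p := by rw [← pow_succ]; congr 1; omega
    rw [this, mul_comm]
    exact Nat.mul_le_mul_left _ hp.two_le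
  have hks : (k + p ^ j - p ^ n) % p ^ (n + 1) < p ^ j := ks_mod_lt hp hk hj hcar
  have hks' : (k + p ^ j - p ^ n) % p ^ (n + 1) < p ^ n := lt_of_lt_of_le hks
    (Nat.pow_le_pow_right hp.one_lt.le (le_of_lt hj))
  apply choose_notcar_zero hp hks' (le_of_lt ht)
  rw [mod_pn_eq hks']
  omega

lemma choose_ksn_one (hp : p.Prime) {k : ℕ} (hk : k % p ^ (n + 1) < p ^ n) {j : ℕ} (hj : j ≤ n)
    (hcar : p ^ n ≤ k % p ^ n + p ^ j) :
    (((k + p ^ j - p ^ n) + p ^ n).choose (p ^ n) : ZMod p) = 1 := by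
  have hmle : k % p ^ n ≤ k := Nat.mod_le _ _
  have heq : (k + p ^ j - p ^ n) + p ^ n = k + p ^ j := by omega
  rw [heq]
  exact choose_car_one hp hk hj hcar

end Vb

section VbProps
variable {p n : ℕ} {d w : ℤ}

lemma val_lt_of_mem {q : Idx n} (hS : Fin.last n ∉ q.1) {s : Fin (n + 1)} (hs : s ∈ q.1) :
    (s : ℕ) < n := by
  have : s ≠ Fin.last n := fun h => hS (h ▸ hs)
  have := Fin.val_lt_last this
  simpa using this

lemma last_not_mem_erase {q : Idx n} (hS : Fin.last n ∉ q.1) (s : Fin (n + 1)) :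
    Fin.last n ∉ q.1.erase s := fun h => hS (Finset.mem_of_mem_erase h)

lemma filter_insert_last {T : Finset (Fin (n + 1))} (hT : Fin.last n ∉ T) :
    (insert (Fin.last n) T).filter (· < Fin.last n) = T := by
  ext x
  simp only [Finset.mem_filter, Finset.mem_insert]
  constructor
  · rintro ⟨(rfl | hx), hlt⟩
    · exact absurd hlt (lt_irrefl _)
    · exact hx
  · intro hx
    exact ⟨Or.inr hx, lt_of_le_of_ne (Fin.le_last x) (fun h => hT (h ▸ hx))⟩

lemma cap_vb (hp : p.Prime) {q : Idx n} (hk : q.2 % p ^ (n + 1) < p ^ n)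
    (hS : Fin.last n ∉ q.1) : cap p n (p ^ n) (vb p n q) = 0 := by
  rw [vb, map_add, map_sum]
  rw [cap_single]
  have h1 : ((q.2.choose (p ^ n) : ZMod p)) = 0 := (choose_eq_zero_iff hp q.2).mpr hk
  rw [h1, mul_zero, zero_smul, zero_add]
  refine Finset.sum_eq_zero fun s hs => ?_
  rw [map_smul, cap_single]
  have hs1 : s ∈ q.1 := (Finset.mem_filter.mp hs).1
  have hcar : p ^ n ≤ q.2 % p ^ n + p ^ (s : ℕ) := (Finset.mem_filter.mp hs).2
  have hlt : (s : ℕ) < n := val_lt_of_mem hS hs1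
  have h2 : (((bmap p n q s).2).choose (p ^ n) : ZMod p) = 0 := by
    apply (choose_eq_zero_iff hp _).mpr
    have := ks_mod_lt hp hk hlt hcar
    exact lt_of_lt_of_le this (Nat.pow_le_pow_right hp.one_lt.le (le_of_lt hlt))
  rw [h2, mul_zero, zero_smul, smul_zero]

lemma capSigma_single_q (hp : p.Prime) {q : Idx n} (hk : q.2 % p ^ (n + 1) < p ^ n)
    (hS : Fin.last n ∉ q.1) :
    cap p n (p ^ n) (sigma p n (Finsupp.single q (1 : ZMod p))) =
      ∑ s ∈ Car p n q, ((-1 : ZMod p) ^ ((q.1.filter (· < s)).card)) •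
        Finsupp.single (q.1.erase s, q.2 + p ^ (s : ℕ) - p ^ n) (1 : ZMod p) := by
  rw [capSigma_single]
  have hsub : Car p n q ⊆ q.1 := Finset.filter_subset _ _
  refine (Finset.sum_subset hsub fun x hx hnx => ?_).symm.trans
    (Finset.sum_congr rfl fun s hs => ?_)
  · have hP : ¬ p ^ n ≤ q.2 % p ^ n + p ^ (x : ℕ) :=
      fun hP => hnx (Finset.mem_filter.mpr ⟨hx, hP⟩)
    have hncar : q.2 % p ^ n + p ^ (x : ℕ) < p ^ n := by omega
    rw [choose_notcar_zero hp hk (Nat.lt_succ_iff.mp x.isLt) hncar, mul_zero, zero_smul]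
  · have hcar : p ^ n ≤ q.2 % p ^ n + p ^ (s : ℕ) := (Finset.mem_filter.mp hs).2
    rw [choose_car_one hp hk (Nat.lt_succ_iff.mp s.isLt) hcar, one_mul, mul_one]

lemma capSigma_single_bs (hp : p.Prime) {q : Idx n} (hk : q.2 % p ^ (n + 1) < p ^ n)
    (hS : Fin.last n ∉ q.1) {s : Fin (n + 1)} (hs : s ∈ Car p n q) :
    cap p n (p ^ n) (sigma p n (Finsupp.single (bmap p n q s) (1 : ZMod p))) =
      ((-1 : ZMod p) ^ (q.1.card - 1)) •
        Finsupp.single (q.1.erase s, q.2 + p ^ (s : ℕ) - p ^ n) (1 : ZMod p) := by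
  have hs1 : s ∈ q.1 := (Finset.mem_filter.mp hs).1
  have hcar : p ^ n ≤ q.2 % p ^ n + p ^ (s : ℕ) := (Finset.mem_filter.mp hs).2
  have hlt : (s : ℕ) < n := val_lt_of_mem hS hs1
  have hlastT : Fin.last n ∉ q.1.erase s := last_not_mem_erase hS s
  rw [capSigma_single]
  show (∑ t ∈ insert (Fin.last n) (q.1.erase s), _) = _
  rw [Finset.sum_insert hlastT]
  have hz : (∑ t ∈ q.1.erase s,
      ((1 : ZMod p) * (-1 : ZMod p) ^ (((bmap p n q s).1.filter (· < t)).card) *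
        (((bmap p n q s).2 + p ^ (t : ℕ)).choose (p ^ n) : ZMod p)) •
      Finsupp.single ((bmap p n q s).1.erase t, (bmap p n q s).2 + p ^ (t : ℕ) - p ^ n)
        (1 : ZMod p)) = 0 := by
    refine Finset.sum_eq_zero fun t ht => ?_
    have ht1 : t ∈ q.1 := Finset.mem_of_mem_erase ht
    have htlt : (t : ℕ) < n := val_lt_of_mem hS ht1
    have hC : (((q.2 + p ^ (s : ℕ) - p ^ n) + p ^ (t : ℕ)).choose (p ^ n) : ZMod p) = 0 :=
      choose_bs_zero hp hk hlt htlt hcar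
    show ((1 : ZMod p) * _ * ((((q.2 + p ^ (s : ℕ) - p ^ n) + p ^ (t : ℕ)).choose (p ^ n) : ZMod p))) • _ = 0
    rw [hC, mul_zero, zero_smul]
  rw [hz, add_zero]
  have hfil : ((bmap p n q s).1.filter (· < Fin.last n)) = q.1.erase s :=
    filter_insert_last hlastT
  have hcard : (q.1.erase s).card = q.1.card - 1 := Finset.card_erase_of_mem hs1
  have hC1 : (((bmap p n q s).2 + p ^ ((Fin.last n : Fin (n + 1)) : ℕ)).choose (p ^ n) :
      ZMod p) = 1 := by
    show (((q.2 + p ^ (s : ℕ) - p ^ n) + p ^ ((Fin.last n).val)).choose (p ^ n) : ZMod p) = 1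
    rw [Fin.val_last]
    exact choose_ksn_one hp hk (by omega) hcar
  have hidx : ((bmap p n q s).1.erase (Fin.last n),
      (bmap p n q s).2 + p ^ ((Fin.last n : Fin (n + 1)) : ℕ) - p ^ n) =
      (q.1.erase s, q.2 + p ^ (s : ℕ) - p ^ n) := by
    simp only [bmap, Fin.val_last, Nat.add_sub_cancel]
    rw [Finset.erase_insert hlastT]
  rw [hC1, mul_one, one_mul, hfil, hcard, hidx]

lemma sign_cancel (c m : ℕ) (hm : 1 ≤ m) :
    ((-1 : ZMod p) ^ c) + ((-1 : ZMod p) ^ (c + m)) * ((-1 : ZMod p) ^ (m - 1)) = 0 := by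
  obtain ⟨m', rfl⟩ : ∃ m', m = m' + 1 := ⟨m - 1, by omega⟩
  rw [← pow_add]
  have he : c + (m' + 1) + (m' + 1 - 1) = (c + 1) + 2 * m' := by omega
  rw [he, pow_add, pow_mul, neg_one_sq, one_pow, mul_one, pow_succ]
  ring

lemma capSigma_vb (hp : p.Prime) {q : Idx n} (hk : q.2 % p ^ (n + 1) < p ^ n)
    (hS : Fin.last n ∉ q.1) : cap p n (p ^ n) (sigma p n (vb p n q)) = 0 := by
  rw [vb, map_add, map_add, map_sum, map_sum]
  rw [capSigma_single_q hp hk hS]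
  have hre : ∀ s ∈ Car p n q,
      cap p n (p ^ n) (sigma p n
        (((-1 : ZMod p) ^ ((q.1.filter (· < s)).card + q.1.card)) •
          Finsupp.single (bmap p n q s) 1)) =
      (((-1 : ZMod p) ^ ((q.1.filter (· < s)).card + q.1.card)) *
        ((-1 : ZMod p) ^ (q.1.card - 1))) •
        Finsupp.single (q.1.erase s, q.2 + p ^ (s : ℕ) - p ^ n) (1 : ZMod p) := by
    intro s hs
    rw [map_smul, map_smul, capSigma_single_bs hp hk hS hs, smul_smul]
  rw [Finset.sum_congr rfl hre, ← Finset.sum_add_distrib]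
  refine Finset.sum_eq_zero fun s hs => ?_
  rw [← add_smul]
  have hs1 : s ∈ q.1 := (Finset.mem_filter.mp hs).1
  have hcard : 1 ≤ q.1.card := Finset.card_pos.mpr ⟨s, hs1⟩
  rw [sign_cancel _ _ hcard, zero_smul]

end VbProps

section Lower
variable {p n : ℕ} {d w : ℤ}

lemma bmap_mem_Bfin (hp : p.Prime) {q : Idx n} (hq : q ∈ Bfin p n d w)
    (hS : Fin.last n ∉ q.1) {s : Fin (n + 1)} (hs : s ∈ Car p n q) :
    bmap p n q s ∈ Bfin p n d w := by
  rw [mem_Bfin] at hq ⊢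
  obtain ⟨h1, h2⟩ := hq
  have hs1 : s ∈ q.1 := (Finset.mem_filter.mp hs).1
  have hcar : p ^ n ≤ q.2 % p ^ n + p ^ (s : ℕ) := (Finset.mem_filter.mp hs).2
  have hmle : q.2 % p ^ n ≤ q.2 := Nat.mod_le _ _
  have hks : p ^ n ≤ q.2 + p ^ (s : ℕ) := by omega
  have hlastT : Fin.last n ∉ q.1.erase s := last_not_mem_erase hS s
  constructor
  · unfold degIdx at h1 ⊢
    show (∑ i ∈ insert (Fin.last n) (q.1.erase s), (2 * (p : ℤ) ^ (i : ℕ) - 1)) +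
      2 * ((q.2 + p ^ (s : ℕ) - p ^ n : ℕ) : ℤ) = d
    rw [Finset.sum_insert hlastT, Finset.sum_erase_eq_sub hs1]
    have hcast : ((q.2 + p ^ (s : ℕ) - p ^ n : ℕ) : ℤ) =
        (q.2 : ℤ) + (p : ℤ) ^ (s : ℕ) - (p : ℤ) ^ n := by
      rw [Int.natCast_sub hks]
      push_cast
      ring
    rw [hcast, Fin.val_last]
    linear_combination h1
  · unfold wtIdx at h2 ⊢
    show -(((insert (Fin.last n) (q.1.erase s)).card : ℤ)) = w
    rw [Finset.card_insert_of_notMem hlastT, Finset.card_erase_of_mem hs1]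
    have hcard : 1 ≤ q.1.card := Finset.card_pos.mpr ⟨s, hs1⟩
    rw [Nat.sub_add_cancel hcard]
    exact h2

lemma bmap_bad (hp : p.Prime) {q : Idx n} (hk : q.2 % p ^ (n + 1) < p ^ n)
    (hS : Fin.last n ∉ q.1) {s : Fin (n + 1)} (hs : s ∈ Car p n q) :
    bad p n (bmap p n q s) := by
  have hs1 : s ∈ q.1 := (Finset.mem_filter.mp hs).1
  have hcar : p ^ n ≤ q.2 % p ^ n + p ^ (s : ℕ) := (Finset.mem_filter.mp hs).2
  have hlt : (s : ℕ) < n := val_lt_of_mem hS hs1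
  right
  constructor
  · have h := ks_mod_lt hp hk hlt hcar
    have : p ^ (s : ℕ) ≤ p ^ n := Nat.pow_le_pow_right hp.one_lt.le (le_of_lt hlt)
    show (q.2 + p ^ (s : ℕ) - p ^ n) % p ^ (n + 1) ≤ p ^ n - 1
    omega
  · exact Finset.mem_insert_self _ _

lemma vb_mem (hp : p.Prime) {q : Idx n} (hq : q ∈ Bfin p n d w)
    (hk : q.2 % p ^ (n + 1) < p ^ n) (hS : Fin.last n ∉ q.1) :
    vb p n q ∈ Kker p n ⊓ Acomp p n d w := by
  refine Submodule.mem_inf.mpr ⟨Submodule.mem_inf.mpr ⟨?_, ?_⟩, ?_⟩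
  · exact LinearMap.mem_ker.mpr (cap_vb hp hk hS)
  · exact LinearMap.mem_ker.mpr (capSigma_vb hp hk hS)
  · rw [vb]
    refine Submodule.add_mem _ (single_mem_Acomp p n d w hq) ?_
    refine Submodule.sum_mem _ fun s hs => ?_
    exact Submodule.smul_mem _ _ (single_mem_Acomp p n d w (bmap_mem_Bfin hp hq hS hs))

lemma vb_coeff (hp : p.Prime) {q q' : Idx n} (hk : q.2 % p ^ (n + 1) < p ^ n)
    (hS : Fin.last n ∉ q.1) (hq' : ¬ bad p n q') :
    vb p n q q' = if q = q' then 1 else 0 := by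
  rw [vb, Finsupp.add_apply, Finsupp.single_apply]
  have hz : (∑ s ∈ Car p n q,
      ((-1 : ZMod p) ^ ((q.1.filter (· < s)).card + q.1.card)) •
        Finsupp.single (bmap p n q s) (1 : ZMod p)) q' = 0 := by
    rw [Finsupp.finset_sum_apply]
    refine Finset.sum_eq_zero fun s hs => ?_
    rw [Finsupp.smul_apply, Finsupp.single_apply, if_neg, smul_zero]
    intro h
    exact hq' (h ▸ bmap_bad hp hk hS hs)
  rw [hz, add_zero]

lemma acomp_finiteDimensional (hp : p.Prime) :
    Module.Finite (ZMod p) ↥(Acomp p n d w) := by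
  haveI : Fact p.Prime := ⟨hp⟩
  rw [Acomp_eq_span]
  exact FiniteDimensional.span_of_finite _ ((Finset.finite_toSet _).image _)

lemma finrank_inf_ge (hp : p.Prime) :
    (Dfin p n d w).card ≤ Module.finrank (ZMod p) ↥(Kker p n ⊓ Acomp p n d w) := by
  haveI : Fact p.Prime := ⟨hp⟩
  haveI : Module.Finite (ZMod p) ↥(Acomp p n d w) := acomp_finiteDimensional hp
  haveI : FiniteDimensional (ZMod p) ↥(Kker p n ⊓ Acomp p n d w) :=
    Submodule.finiteDimensional_of_le inf_le_right
  have hprops : ∀ q : Idx n, q ∈ Dfin p n d w →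
      q ∈ Bfin p n d w ∧ q.2 % p ^ (n + 1) < p ^ n ∧ Fin.last n ∉ q.1 ∧ ¬ bad p n q := by
    intro q hq
    obtain ⟨hB, hnb⟩ := Finset.mem_filter.mp hq
    obtain ⟨hC, hlast⟩ := (not_bad_iff hp q).mp hnb
    exact ⟨hB, (choose_eq_zero_iff hp q.2).mp hC, hlast, hnb⟩
  let fam : ↥(Dfin p n d w) → ↥(Kker p n ⊓ Acomp p n d w) := fun q =>
    ⟨vb p n q.val, vb_mem hp (hprops q.val q.2).1 (hprops q.val q.2).2.1 (hprops q.val q.2).2.2.1⟩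
  have hli : LinearIndependent (ZMod p) fam := by
    rw [Fintype.linearIndependent_iff]
    intro g hg q0
    have hval : (∑ q : ↥(Dfin p n d w), g q • vb p n q.val) = 0 := by
      have := congrArg (Submodule.subtype (Kker p n ⊓ Acomp p n d w)) hg
      simpa [map_sum, fam] using this
    have heval := congrArg (fun y : A p n => y q0.val) hval
    simp only [Finsupp.finset_sum_apply, Finsupp.smul_apply, Finsupp.coe_zero,
      Pi.zero_apply] at heval
    have hsum : (∑ q : ↥(Dfin p n d w), g q • (vb p n q.val) q0.val) = g q0 := by
      rw [Finset.sum_eq_single q0]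
      · rw [vb_coeff hp (hprops q0.val q0.2).2.1 (hprops q0.val q0.2).2.2.1
          (hprops q0.val q0.2).2.2.2, if_pos rfl, smul_eq_mul, mul_one]
      · intro q _ hne
        rw [vb_coeff hp (hprops q.val q.2).2.1 (hprops q.val q.2).2.2.1
          (hprops q0.val q0.2).2.2.2, if_neg, smul_zero]
        exact fun h => hne (Subtype.ext h)
      · intro habs
        exact absurd (Finset.mem_univ q0) habs
    rw [hsum] at heval
    exact heval
  have := hli.fintype_card_le_finrank
  rwa [Fintype.card_coe] at this

end Lower

/-- For every pair of integers `(d, w)`, the `𝔽_p`-codimension of the bidegree-`(d, w)`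
homogeneous component of `K` inside the bidegree-`(d, w)` homogeneous component of `A`
equals the number of pairs `(S, k)` with `S ⊆ {0, 1, …, n}`, `k ≥ 0`,
`Σ_{i∈S}(2p^i − 1) + 2k = d` and `−|S| = w`, such that either the remainder of `k`
modulo `p^{n+1}` is at least `p^n`, or that remainder is at most `p^n − 1` and `n ∈ S`. -/
theorem codim_K_component (p n : ℕ) (hp : p.Prime) (hn : 1 ≤ n) (d w : ℤ) :
    Module.finrank (ZMod p) ↥(Acomp p n d w) =
      Module.finrank (ZMod p) ↥(Kker p n ⊓ Acomp p n d w) +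
      Set.ncard {q : Idx n | degIdx p n q = d ∧ wtIdx n q = w ∧
        (p ^ n ≤ q.2 % p ^ (n + 1) ∨
          (q.2 % p ^ (n + 1) ≤ p ^ n - 1 ∧ Fin.last n ∈ q.1))} := by
  haveI : Fact p.Prime := ⟨hp⟩
  have hset : {q : Idx n | degIdx p n q = d ∧ wtIdx n q = w ∧
      (p ^ n ≤ q.2 % p ^ (n + 1) ∨
        (q.2 % p ^ (n + 1) ≤ p ^ n - 1 ∧ Fin.last n ∈ q.1))} = ↑(Ufin p n d w) := by
    ext q
    rw [Set.mem_setOf_eq, Finset.mem_coe, Ufin, Finset.mem_filter, mem_Bfin]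
    unfold bad
    tauto
  rw [hset, Set.ncard_coe_finset]
  have h1 : Module.finrank (ZMod p) ↥(Acomp p n d w) = (Bfin p n d w).card :=
    finrank_Acomp p n d w hp
  have h2 : (Dfin p n d w).card ≤
      Module.finrank (ZMod p) ↥(Kker p n ⊓ Acomp p n d w) := finrank_inf_ge hp
  have h3 : Module.finrank (ZMod p) ↥(Kker p n ⊓ Acomp p n d w) ≤ (Dfin p n d w).card :=
    finrank_inf_le d w hp
  have h4 : (Ufin p n d w).card + (Dfin p n d w).card = (Bfin p n d w).card := by
    rw [Ufin, Dfin]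
    exact Finset.card_filter_add_card_filter_not (p := bad p n)
  omega
end
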